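/- arXiv:2504.02289 — 2 statements merged into one kernel-verified Lean document; each statement's English description precedes it below -/
import Mathlib

section
/- Let H = (V,E) be a vertex-biconnected hypergraph with |V| ≥ 2 and |E| ≥ 2, and let e, f be two distinct (possibly parallel) hyperedges. Then there exist two vectors x₁, x₂ in the multi-tree family Ω(H) such that x₁ - 1_e + 1_f = x₂. -/
open Finset
open scoped Classical

noncomputable section

variable {V E : Type*}

/-- The set of hyperedges meeting at least two parts of the partition `P` (the cut `δ(P)`). -/
def hcut [Fintype V] [DecidableEq V] [Fintype E] (edge : E → Finset V)
    (P : Finpartition (univ : Finset V)) : Finset E :=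
  univ.filter fun e => ∃ p ∈ P.parts, ∃ q ∈ P.parts,
    p ≠ q ∧ (edge e ∩ p).Nonempty ∧ (edge e ∩ q).Nonempty

/-- The hyperedges entirely contained in the vertex set `X`. -/
def edgesIn [DecidableEq V] [Fintype E] (edge : E → Finset V) (X : Finset V) : Finset E :=
  univ.filter fun e => edge e ⊆ X

/-- The strength `S(H)`. -/
def strength [Fintype V] [DecidableEq V] [Fintype E] (edge : E → Finset V) : ℝ :=
  sInf { r : ℝ | ∃ P : Finpartition (univ : Finset V), 2 ≤ P.parts.card ∧
    r = ((hcut edge P).card : ℝ) / ((P.parts.card : ℝ) - 1) }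

/-- The weighted strength `S_σ(H)`. -/
def strengthW [Fintype V] [DecidableEq V] [Fintype E] (σ : E → ℝ) (edge : E → Finset V) : ℝ :=
  sInf { r : ℝ | ∃ P : Finpartition (univ : Finset V), 2 ≤ P.parts.card ∧
    r = (∑ e ∈ hcut edge P, σ e) / ((P.parts.card : ℝ) - 1) }

/-- The fractional arboricity `D(H)`. -/
def arboricity [Fintype V] [DecidableEq V] [Fintype E] (edge : E → Finset V) : ℝ :=
  sSup { r : ℝ | ∃ X : Finset V, 2 ≤ X.card ∧
    r = ((edgesIn edge X).card : ℝ) / ((X.card : ℝ) - 1) }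

/-- Connectivity of the subhypergraph induced by the vertex set `W`
(only hyperedges contained in `W` are used). -/
def ConnectedIn (edge : E → Finset V) (W : Finset V) : Prop :=
  ∀ X ⊆ W, X.Nonempty → X ≠ W →
    ∃ e, edge e ⊆ W ∧ (edge e ∩ X).Nonempty ∧ ((edge e ∩ W) \ X).Nonempty

/-- Connectivity of the trace hypergraph on the vertex set `W`
(each hyperedge is replaced by its intersection with `W`, as in vertex deletion). -/
def ConnectedOn (edge : E → Finset V) (W : Finset V) : Prop :=
  ∀ X ⊆ W, X.Nonempty → X ≠ W →
    ∃ e, ((edge e ∩ W) ∩ X).Nonempty ∧ ((edge e ∩ W) \ X).Nonempty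

/-- A hypergraph is connected if every nonempty proper vertex subset is crossed by a hyperedge. -/
def HConnected [Fintype V] (edge : E → Finset V) : Prop :=
  ConnectedIn edge univ

/-- `H` is partition-connected if `|δ(P)| ≥ |P| - 1` for every partition `P` of `V`. -/
def PartitionConnected [Fintype V] [DecidableEq V] [Fintype E] (edge : E → Finset V) : Prop :=
  ∀ P : Finpartition (univ : Finset V), P.parts.card - 1 ≤ (hcut edge P).card

/-- A partition is feasible if each part induces a connected subhypergraph. -/
def Feasible [Fintype V] [DecidableEq V] (edge : E → Finset V) (P : Finpartition (univ : Finset V)) : Prop :=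
  ∀ p ∈ P.parts, ConnectedIn edge p

/-- The edges of the shrunk hypergraph `H_P`: vertices are the parts of `P`, and a hyperedge
becomes the set of parts it meets. -/
def shrunkEdge [Fintype V] [DecidableEq V] (edge : E → Finset V)
    (P : Finpartition (univ : Finset V)) (e : E) : Finset {p : Finset V // p ∈ P.parts} :=
  univ.filter fun p => (edge e ∩ p.1).Nonempty

/-- The shrunk hypergraph `H_P` is vertex-biconnected: it is connected and no single
vertex deletion disconnects it. -/
def ShrunkBiconnected [Fintype V] [DecidableEq V] [Fintype E] (edge : E → Finset V)
    (P : Finpartition (univ : Finset V)) : Prop :=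
  ConnectedIn (shrunkEdge edge P) univ ∧
  ∀ p : {p : Finset V // p ∈ P.parts}, ConnectedOn (shrunkEdge edge P) (univ \ {p})

/-- `F` is a hypertree: a hyperforest of size `|V| - 1`. -/
def IsHypertree [Fintype V] [DecidableEq V] (edge : E → Finset V) (F : Finset E) : Prop :=
  F.card = Fintype.card V - 1 ∧
  ∀ X : Finset V, X.Nonempty → (F.filter fun e => edge e ⊆ X).card ≤ X.card - 1

/-- `m` is the multiplicity vector of a multiset of hyperedges forming a hypertree on `V`. -/
def IsMultiTree [Fintype V] [DecidableEq V] [Fintype E] (edge : E → Finset V) (m : E → ℕ) : Prop :=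
  (∑ e, m e) = Fintype.card V - 1 ∧
  ∀ X : Finset V, X.Nonempty → (∑ e ∈ edgesIn edge X, m e) ≤ X.card - 1

/-- The multi-tree family `Ω(H)` as a set of usage vectors in `ℝ^E`. -/
def OmegaSet [Fintype V] [DecidableEq V] [Fintype E] (edge : E → Finset V) : Set (E → ℝ) :=
  { x | ∃ m : E → ℕ, IsMultiTree edge m ∧ x = fun e => (m e : ℝ) }

/-- The hypertree family `Γ(H)` as a set of (indicator) usage vectors in `ℝ^E`. -/
def GammaSet [Fintype V] [DecidableEq V] [Fintype E] (edge : E → Finset V) : Set (E → ℝ) :=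
  { x | ∃ F : Finset E, IsHypertree edge F ∧ x = fun e => if e ∈ F then (1 : ℝ) else 0 }

/-- The admissible set of a family of usage vectors. -/
def AdmSet [Fintype E] (G : Set (E → ℝ)) : Set (E → ℝ) :=
  { ρ | (∀ e, 0 ≤ ρ e) ∧ ∀ x ∈ G, 1 ≤ ∑ e, x e * ρ e }

/-- The weighted 1-modulus of a family of usage vectors. -/
def Mod1 [Fintype E] (σ : E → ℝ) (G : Set (E → ℝ)) : ℝ :=
  sInf { t : ℝ | ∃ ρ ∈ AdmSet G, t = ∑ e, σ e * ρ e }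

/-- `w` is an extreme point of `S`: it lies in `S` and is not the midpoint of two
distinct points of `S`. -/
def IsExtremePt [Fintype E] (S : Set (E → ℝ)) (w : E → ℝ) : Prop :=
  w ∈ S ∧ ∀ y ∈ S, ∀ z ∈ S, (∀ e, w e = (y e + z e) / 2) → y = z

/-- The rank function of the hypergraphic matroid `M(H)` (Frank et al.):
`r(F) = min { |V| - |P| + |δ_F(P)| }` over partitions `P` of `V`. -/
def hrank [Fintype V] [DecidableEq V] [Fintype E] [DecidableEq E]
    (edge : E → Finset V) (F : Finset E) : ℕ :=
  sInf { n : ℕ | ∃ P : Finpartition (univ : Finset V),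
    n = Fintype.card V - P.parts.card + (hcut edge P ∩ F).card }

/-- The (unweighted) strength of the hypergraphic matroid `M(H)`. -/
def mstrength [Fintype V] [DecidableEq V] [Fintype E] [DecidableEq E]
    (edge : E → Finset V) : ℝ :=
  sInf { r : ℝ | ∃ X : Finset E, hrank edge (univ \ X) < hrank edge univ ∧
    r = (X.card : ℝ) / ((hrank edge univ : ℝ) - (hrank edge (univ \ X) : ℝ)) }

/-- The fractional arboricity of the hypergraphic matroid `M(H)`. -/
def marboricity [Fintype V] [DecidableEq V] [Fintype E] [DecidableEq E]
    (edge : E → Finset V) : ℝ :=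
  sSup { r : ℝ | ∃ X : Finset E, 0 < hrank edge X ∧ r = (X.card : ℝ) / (hrank edge X : ℝ) }

end

/-! Split `V` into a set `A` and its complement, each connected in the trace sense, such that both
`e` and `f` meet both sides. Such an `A` is grown from one end `u` of `e` while the other end `v`
stays outside: as long as `f` lies outside `A`, biconnectivity provides a vertex `w ≠ v` outside `A`,
adjacent to `A`, whose removal keeps the complement connected, and `w` is moved into `A`.
If `T_A` and `T_B` are multi-trees spanning `A` and `Aᶜ`, then `T_A + T_B + e` and
`T_A + T_B + f` are multi-trees of `H`. -/

section

variable {V E : Type*} {edge : E → Finset V}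

def IsClosedIn (edge : E → Finset V) (W X : Finset V) : Prop :=
  ∀ g, ∀ x ∈ edge g, x ∈ X → ∀ t ∈ edge g, t ∈ W → t ∈ X

lemma connectedOn_iff {W : Finset V} :
    ConnectedOn edge W ↔ ∀ X ⊆ W, X.Nonempty → IsClosedIn edge W X → X = W := by
  simp only [ConnectedOn, IsClosedIn, Finset.Nonempty, mem_inter, mem_sdiff]
  refine forall₂_congr fun X hXW => ⟨fun h hX hcl => ?_, fun h hX hXW' => ?_⟩
  · by_contra hXW'
    obtain ⟨g, ⟨x, hx⟩, ⟨t, ht⟩⟩ := h hX hXW'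
    exact ht.2 (hcl g x hx.1.1 hx.2 t ht.1.1 ht.1.2)
  · by_contra hcross
    push Not at hcross
    exact hXW' (h hX fun g x hx hxX t ht htW => hcross g ⟨x, ⟨hx, hXW hxX⟩, hxX⟩ t ⟨ht, htW⟩)

lemma IsClosedIn.sdiff [DecidableEq V] {W X : Finset V} (hX : IsClosedIn edge W X) :
    IsClosedIn edge W (W \ X) := by
  intro g x hx hxWX t ht htW
  rw [mem_sdiff] at hxWX ⊢
  exact ⟨htW, fun htX => hxWX.2 (hX g t ht htX x hx hxWX.1)⟩

lemma connectedOn_singleton (u : V) : ConnectedOn edge {u} :=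
  connectedOn_iff.mpr fun _ hX hXne _ => hXne.subset_singleton_iff.mp hX

lemma ConnectedOn.insert [DecidableEq V] {A : Finset V} (hA : ConnectedOn edge A) {w a : V}
    {g : E} (hw : w ∈ edge g) (ha : a ∈ edge g) (haA : a ∈ A) :
    ConnectedOn edge (insert w A) := by
  refine connectedOn_iff.mpr fun X hX hXne hXcl => ?_
  have hXA : (X ∩ A).Nonempty := by
    obtain ⟨x, hx⟩ := hXne
    rcases mem_insert.mp (hX hx) with rfl | hxA
    · exact ⟨a, mem_inter.mpr ⟨hXcl g x hw hx a ha (mem_insert_of_mem haA), haA⟩⟩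
    · exact ⟨x, mem_inter.mpr ⟨hx, hxA⟩⟩
  have hAX : A ⊆ X := by
    refine inter_eq_right.mp (connectedOn_iff.mp hA _ inter_subset_right hXA ?_)
    intro g' x hx hxXA t ht htA
    exact mem_inter.mpr
      ⟨hXcl g' x hx (mem_inter.mp hxXA).1 t ht (mem_insert_of_mem htA), htA⟩
  have hwX : w ∈ X := hXcl g a ha (hAX haA) w hw (mem_insert_self w A)
  exact hX.antisymm (insert_subset hwX hAX)

/-- Induction on `C`: if removing the vertex `w ∈ C` given by biconnectivity disconnects `B`, the
side of the cut avoiding `c` is a smaller such `C`, with `w` in place of `c`. -/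
lemma ConnectedOn.exists_connectedOn_erase_of_isClosedIn [Fintype V] [DecidableEq V]
    (hbi : ∀ x : V, ConnectedOn edge (univ \ {x})) {B : Finset V} (hB : ConnectedOn edge B)
    (hBV : B ≠ univ) {c : V} (hc : c ∈ B) {C : Finset V} (hCB : C ⊆ B.erase c)
    (hC : C.Nonempty) (hCcl : IsClosedIn edge (B.erase c) C) :
    ∃ w ∈ C, (∃ g, w ∈ edge g ∧ ¬ edge g ⊆ B) ∧ ConnectedOn edge (B.erase w) := by
  induction C using Finset.strongInduction generalizing c with
  | H C ih =>
  obtain ⟨a, haB⟩ : ∃ a, a ∉ B := by simpa [eq_univ_iff_forall] using hBV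
  have hCc : C ⊆ univ \ {c} := fun x hx => by simpa using (mem_erase.mp (hCB hx)).1
  have hCne : C ≠ univ \ {c} := by
    rintro rfl
    exact haB (mem_erase.mp (hCB (by simpa using fun hac : a = c => haB (hac ▸ hc)))).2
  obtain ⟨g, ⟨w, hw⟩, ⟨y, hy⟩⟩ := hbi c C hCc hC hCne
  simp only [mem_inter, mem_sdiff, mem_univ, mem_singleton, true_and] at hw hy
  have hwB : w ∈ B := (mem_erase.mp (hCB hw.2)).2
  have hyB : y ∉ B := fun hyB =>
    hy.2 (hCcl g w hw.1.1 hw.2 y hy.1.1 (mem_erase.mpr ⟨hy.1.2, hyB⟩))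
  have hwout : ∃ g, w ∈ edge g ∧ ¬ edge g ⊆ B := ⟨g, hw.1.1, fun h => hyB (h hy.1.1)⟩
  by_cases hcon : ConnectedOn edge (B.erase w)
  · exact ⟨w, hw.2, hwout, hcon⟩
  obtain ⟨D, hDB, hDne, hDcl, hcD⟩ : ∃ D ⊆ B.erase w, D.Nonempty ∧
      IsClosedIn edge (B.erase w) D ∧ c ∉ D := by
    rw [connectedOn_iff] at hcon
    push Not at hcon
    obtain ⟨X, hXB, hXne, hXcl, hXneq⟩ := hcon
    by_cases hcX : c ∈ X
    · exact ⟨_, sdiff_subset, sdiff_nonempty.mpr fun h => hXneq (hXB.antisymm h), hXcl.sdiff,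
        fun h => (mem_sdiff.mp h).2 hcX⟩
    · exact ⟨X, hXB, hXne, hXcl, hcX⟩
  have hwD : w ∉ D := fun h => (mem_erase.mp (hDB h)).1 rfl
  -- `D \ C` would be a proper closed part of the connected set `B`
  have hDC : D ⊆ C := by
    by_contra hDC
    have hcl : IsClosedIn edge B (D \ C) := by
      intro g' z hz hzDC t ht htB
      rw [mem_sdiff] at hzDC ⊢
      have hzB := mem_erase.mp (hDB hzDC.1)
      have hg'C : ∀ x ∈ edge g', x ∉ C := fun x hx hxC => hzDC.2 <|
        hCcl g' x hx hxC z hz (mem_erase.mpr ⟨fun h => hcD (h ▸ hzDC.1), hzB.2⟩)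
      have htw : t ≠ w := fun h => hg'C t ht (h ▸ hw.2)
      exact ⟨hDcl g' z hz hzDC.1 t ht (mem_erase.mpr ⟨htw, htB⟩), hg'C t ht⟩
    have := connectedOn_iff.mp hB _ (fun x hx => (mem_erase.mp (hDB (mem_sdiff.mp hx).1)).2)
      (sdiff_nonempty.mpr hDC) hcl
    exact hwD (mem_sdiff.mp (this ▸ hwB)).1
  obtain ⟨w', hw'D, hw'⟩ := ih D (ssubset_of_subset_of_ne hDC fun h => hwD (h ▸ hw.2))
    hwB hDB hDne hDcl
  exact ⟨w', hDC hw'D, hw'⟩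

end

section

variable {V E : Type*} [Fintype V] [DecidableEq V] {edge : E → Finset V}

lemma exists_connectedOn_split (hbi : ∀ x : V, ConnectedOn edge (univ \ {x})) {e f : E}
    (he : 2 ≤ (edge e).card) (hf : 2 ≤ (edge f).card) :
    ∃ A : Finset V, ConnectedOn edge A ∧ ConnectedOn edge Aᶜ ∧
      (edge e ∩ A).Nonempty ∧ (edge e ∩ Aᶜ).Nonempty ∧
      (edge f ∩ A).Nonempty ∧ (edge f ∩ Aᶜ).Nonempty := by
  obtain ⟨u, hu, v, hv, huv⟩ := one_lt_card.mp he
  let Good (A : Finset V) : Prop :=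
    u ∈ A ∧ v ∉ A ∧ ConnectedOn edge A ∧ ConnectedOn edge Aᶜ ∧ (edge f ∩ Aᶜ).Nonempty
  have hgood_u : Good {u} := by
    obtain ⟨p, hp, hpu⟩ := exists_mem_ne hf u
    refine ⟨mem_singleton_self u, by simpa using huv.symm, connectedOn_singleton u, ?_,
      ⟨p, by simpa [hp] using hpu⟩⟩
    simpa [compl_eq_univ_sdiff] using hbi u
  obtain ⟨A, hAgood, hAmax⟩ :=
    exists_max_image (univ.filter Good) card ⟨{u}, mem_filter.mpr ⟨mem_univ _, hgood_u⟩⟩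
  obtain ⟨huA, hvA, hA, hAc, hfAc⟩ := (mem_filter.mp hAgood).2
  refine ⟨A, hA, hAc, ⟨u, mem_inter.mpr ⟨hu, huA⟩⟩, ⟨v, mem_inter.mpr ⟨hv, mem_compl.mpr hvA⟩⟩,
    ?_, hfAc⟩
  -- otherwise a vertex can be moved from `Aᶜ` into `A`, contradicting maximality
  by_contra hfA
  have hfAc' : edge f ⊆ Aᶜ := fun x hx => mem_compl.mpr fun hxA => hfA ⟨x, mem_inter.mpr ⟨hx, hxA⟩⟩
  obtain ⟨p, hp, hpv⟩ := exists_mem_ne hf v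
  obtain ⟨w, hw, ⟨g, hwg, hgAc⟩, hAcw⟩ :=
    hAc.exists_connectedOn_erase_of_isClosedIn hbi (fun h => mem_compl.mp (h ▸ mem_univ u) huA)
      (mem_compl.mpr hvA) subset_rfl ⟨p, mem_erase.mpr ⟨hpv, hfAc' hp⟩⟩
      fun _ _ _ _ _ _ ht => ht
  obtain ⟨hwv, hwAc⟩ := mem_erase.mp hw
  obtain ⟨a, hag, haA⟩ := not_subset.mp hgAc
  obtain ⟨q, hq, hqw⟩ := exists_mem_ne hf w
  have hgood_w : Good (insert w A) := by
    refine ⟨mem_insert_of_mem huA, fun h => (mem_insert.mp h).elim (hwv ∘ Eq.symm) hvA,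
      hA.insert hwg hag (by simpa using haA), by rwa [compl_insert], ⟨q, ?_⟩⟩
    rw [compl_insert]
    exact mem_inter.mpr ⟨hq, mem_erase.mpr ⟨hqw, hfAc' hq⟩⟩
  have := hAmax _ (mem_filter.mpr ⟨mem_univ _, hgood_w⟩)
  rw [card_insert_of_notMem (mem_compl.mp hwAc)] at this
  omega

end

section

variable {V E : Type*} [DecidableEq V] [Fintype E] {edge : E → Finset V}

/-- The truncated subtraction makes the bound `0` when `X` misses `W`. -/
def IsMultiTreeOn (edge : E → Finset V) (W : Finset V) (m : E → ℕ) : Prop :=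
  ∑ g, m g = W.card - 1 ∧ ∀ X : Finset V, ∑ g ∈ edgesIn edge X, m g ≤ (X ∩ W).card - 1

lemma isMultiTreeOn_singleton (u : V) : IsMultiTreeOn edge {u} 0 :=
  ⟨by simp, fun _ => by simp⟩

lemma IsMultiTreeOn.union [DecidableEq E] {A B : Finset V} {mA mB : E → ℕ}
    (hA : IsMultiTreeOn edge A mA) (hB : IsMultiTreeOn edge B mB) (hAB : Disjoint A B) {g : E}
    (hgA : (edge g ∩ A).Nonempty) (hgB : (edge g ∩ B).Nonempty) :
    IsMultiTreeOn edge (A ∪ B) fun x => mA x + mB x + if x = g then 1 else 0 := by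
  have hApos : 0 < A.card := card_pos.mpr (hgA.mono inter_subset_right)
  have hBpos : 0 < B.card := card_pos.mpr (hgB.mono inter_subset_right)
  refine ⟨?_, fun X => ?_⟩
  · rw [sum_add_distrib, sum_add_distrib, hA.1, hB.1, card_union_of_disjoint hAB]
    simp only [sum_ite_eq', mem_univ, if_true]
    omega
  · have hX := card_union_of_disjoint (s := X ∩ A) (t := X ∩ B)
      (hAB.mono inter_subset_right inter_subset_right)
    rw [← inter_union_distrib_left] at hX
    rw [sum_add_distrib, sum_add_distrib, sum_ite_eq', hX]
    have hAX := hA.2 X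
    have hBX := hB.2 X
    split_ifs with hgX
    · have hgX : edge g ⊆ X := (mem_filter.mp hgX).2
      have := card_pos.mpr (hgA.mono (inter_subset_inter_right hgX))
      have := card_pos.mpr (hgB.mono (inter_subset_inter_right hgX))
      omega
    · omega

lemma exists_isMultiTreeOn_of_connectedOn [DecidableEq E] {W : Finset V}
    (hW : ConnectedOn edge W) (hne : W.Nonempty) : ∃ m, IsMultiTreeOn edge W m := by
  obtain ⟨u, hu⟩ := hne
  obtain ⟨S, hS, hSmax⟩ := exists_max_image
    (W.powerset.filter fun S => S.Nonempty ∧ ∃ m, IsMultiTreeOn edge S m) card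
    ⟨{u}, mem_filter.mpr ⟨by simpa using hu, singleton_nonempty u, 0, isMultiTreeOn_singleton u⟩⟩
  obtain ⟨hSW, hSne, m, hm⟩ := by simpa only [mem_filter, mem_powerset] using hS
  by_cases hSW' : S = W
  · exact ⟨m, hSW' ▸ hm⟩
  -- a hyperedge leaving `S` inside `W` extends the multi-tree by one vertex
  obtain ⟨g, ⟨x, hx⟩, ⟨y, hy⟩⟩ := hW S hSW hSne hSW'
  simp only [mem_inter, mem_sdiff] at hx hy
  have hyS : IsMultiTreeOn edge (insert y S) (fun z => 0 + m z + if z = g then 1 else 0) := by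
    rw [insert_eq]
    exact (isMultiTreeOn_singleton y).union hm (disjoint_singleton_left.mpr hy.2)
      ⟨y, mem_inter.mpr ⟨hy.1.1, mem_singleton_self y⟩⟩ ⟨x, mem_inter.mpr ⟨hx.1.1, hx.2⟩⟩
  have := hSmax (insert y S) <| mem_filter.mpr
    ⟨mem_powerset.mpr (insert_subset hy.1.2 hSW), insert_nonempty y S, _, hyS⟩
  rw [card_insert_of_notMem hy.2] at this
  omega

lemma IsMultiTreeOn.isMultiTree [Fintype V] {m : E → ℕ} (h : IsMultiTreeOn edge univ m) :
    IsMultiTree edge m :=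
  ⟨h.1, fun X _ => by simpa using h.2 X⟩

end

theorem stmt6_general {V E : Type*} [Fintype V] [DecidableEq V] [Fintype E] [DecidableEq E]
    (edge : E → Finset V) (hloopless : ∀ g, 2 ≤ (edge g).card)
    (hbiconn : ∀ v : V, ConnectedOn edge ((univ : Finset V) \ {v}))
    (e f : E) :
    ∃ m₁ m₂ : E → ℕ, IsMultiTree edge m₁ ∧ IsMultiTree edge m₂ ∧
      ∀ g : E, (m₁ g : ℤ) - (if g = e then 1 else 0) + (if g = f then 1 else 0) = (m₂ g : ℤ) := by
  obtain ⟨A, hA, hAc, heA, heAc, hfA, hfAc⟩ :=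
    exists_connectedOn_split hbiconn (hloopless e) (hloopless f)
  obtain ⟨mA, hmA⟩ := exists_isMultiTreeOn_of_connectedOn hA (heA.mono inter_subset_right)
  obtain ⟨mB, hmB⟩ := exists_isMultiTreeOn_of_connectedOn hAc (heAc.mono inter_subset_right)
  have crossing_isMultiTree : ∀ g, (edge g ∩ A).Nonempty → (edge g ∩ Aᶜ).Nonempty →
      IsMultiTree edge fun x => mA x + mB x + if x = g then 1 else 0 := fun g hgA hgAc =>
    IsMultiTreeOn.isMultiTree (by
      simpa only [union_compl] using hmA.union hmB disjoint_compl_right hgA hgAc)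
  refine ⟨_, _, crossing_isMultiTree e heA heAc, crossing_isMultiTree f hfA hfAc, fun g => ?_⟩
  split_ifs <;> push_cast <;> ring

/-- In a loopless vertex-biconnected hypergraph with `|V| ≥ 2` and `|E| ≥ 2`,
for any two distinct (possibly parallel) hyperedges `e, f` there are multi-trees
`x₁, x₂ ∈ Ω(H)` with `x₁ - 1_e + 1_f = x₂`. -/
theorem stmt6 {V E : Type*} [Fintype V] [DecidableEq V] [Fintype E] [DecidableEq E]
    (edge : E → Finset V) (hloopless : ∀ g, 2 ≤ (edge g).card)
    (hconn : HConnected edge)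
    (hbiconn : ∀ v : V, ConnectedOn edge ((univ : Finset V) \ {v}))
    (hV : 2 ≤ Fintype.card V) (hE : 2 ≤ Fintype.card E)
    (e f : E) (hef : e ≠ f) :
    ∃ m₁ m₂ : E → ℕ, IsMultiTree edge m₁ ∧ IsMultiTree edge m₂ ∧
      ∀ g : E, (m₁ g : ℤ) - (if g = e then 1 else 0) + (if g = f then 1 else 0) = (m₂ g : ℤ) :=
  stmt6_general edge hloopless hbiconn e f
end

section
/- Let H = (V,E) be a connected hypergraph and σ ∈ ℝ^E_{>0}. Then the weighted 1-modulus of the multi-tree family Ω(H) equals the weighted strength: Mod_{1,σ}(Ω(H)) = S_σ(H) = min{ σ(δ(𝒫))/(|𝒫|-1) : 𝒫 a partition of V, |𝒫| ≥ 2 }. -/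
open Finset
open scoped Classical

/-!
A partition `P` with at least two parts gives the admissible density
`1_{δ(P)} / (|P| - 1)`: a multi-tree has at most `|p| - 1` edges inside each part `p`,
hence at least `|P| - 1` edges crossing `P`. So `Mod_{1,σ}(Ω) ≤ S_σ`.

Conversely, for every density `ρ ≥ 0` there is a multi-tree `m` with
`S_σ · ℓ_ρ(m) ≤ σ · ρ`, by induction on `|V|`. Lower `ρ` by its minimum `μ` over the edges
with at least two vertices (the cut of the discrete partition `⊥`), contract an edge `e₀`
attaining it, and lift a multi-tree of the contraction by adding `e₀` with multiplicity
`|e₀| - 1`. Contraction can only increase the strength, and the lowering costs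
`μ (|V| - 1) S_σ` on the left against `μ σ(δ(⊥))` on the right, which the ratio of `⊥`
controls.
-/

open Function

section Cuts

variable {V E : Type*} [Fintype V] [DecidableEq V] [Fintype E]

def cutRatios (σ : E → ℝ) (edge : E → Finset V) : Set ℝ :=
  { r | ∃ P : Finpartition (univ : Finset V), 2 ≤ P.parts.card ∧
    r = (∑ e ∈ hcut edge P, σ e) / ((P.parts.card : ℝ) - 1) }

variable {edge : E → Finset V} {P : Finpartition (univ : Finset V)} {e : E}

lemma subset_of_notMem_hcut (he : e ∉ hcut edge P) {p : Finset V} (hp : p ∈ P.parts) {v : V}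
    (hv : v ∈ edge e) (hvp : v ∈ p) : edge e ⊆ p := by
  intro w hw
  obtain ⟨q, hq, hwq⟩ := P.exists_mem (mem_univ w)
  by_contra hwp
  have hpq : p ≠ q := by rintro rfl; exact hwp hwq
  exact he (mem_filter.2 ⟨mem_univ e, p, hp, q, hq, hpq, ⟨v, mem_inter.2 ⟨hv, hvp⟩⟩,
    ⟨w, mem_inter.2 ⟨hw, hwq⟩⟩⟩)

lemma exists_subset_part_of_notMem_hcut (he : e ∉ hcut edge P) (hP : P.parts.Nonempty) :
    ∃ p ∈ P.parts, edge e ⊆ p := by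
  rcases (edge e).eq_empty_or_nonempty with h | ⟨v, hv⟩
  · obtain ⟨p, hp⟩ := hP
    exact ⟨p, hp, h ▸ empty_subset p⟩
  · obtain ⟨p, hp, hvp⟩ := P.exists_mem (mem_univ v)
    exact ⟨p, hp, subset_of_notMem_hcut he hp hv hvp⟩

lemma two_le_card_of_mem_hcut (he : e ∈ hcut edge P) : 2 ≤ (edge e).card := by
  obtain ⟨p, hp, q, hq, hpq, ⟨v, hv⟩, ⟨w, hw⟩⟩ := (mem_filter.1 he).2
  rw [mem_inter] at hv hw
  refine one_lt_card.2 ⟨v, hv.1, w, hw.1, ?_⟩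
  rintro rfl
  exact hpq (P.eq_of_mem_parts hp hq hv.2 hw.2)

lemma HConnected.hcut_nonempty (hconn : HConnected edge) (hP : 2 ≤ P.parts.card) :
    (hcut edge P).Nonempty := by
  obtain ⟨p, hp, q, hq, hpq⟩ := one_lt_card.1 hP
  obtain ⟨x, hx⟩ := P.nonempty_of_mem_parts hq
  have hp_ne : p ≠ univ := by
    rintro rfl
    exact hpq (P.eq_of_mem_parts hp hq (mem_univ x) hx)
  obtain ⟨e, -, ⟨v, hv⟩, ⟨w, hw⟩⟩ :=
    hconn p (subset_univ p) (P.nonempty_of_mem_parts hp) hp_ne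
  obtain ⟨r, hr, hwr⟩ := P.exists_mem (mem_univ w)
  simp only [mem_inter, mem_sdiff] at hv hw
  have hpr : p ≠ r := by rintro rfl; exact hw.2 hwr
  exact ⟨e, mem_filter.2 ⟨mem_univ e, p, hp, r, hr, hpr, ⟨v, mem_inter.2 hv⟩,
    ⟨w, mem_inter.2 ⟨hw.1.1, hwr⟩⟩⟩⟩

lemma IsMultiTree.card_parts_sub_one_le_sum_hcut {m : E → ℕ} (hm : IsMultiTree edge m)
    (P : Finpartition (univ : Finset V)) : P.parts.card - 1 ≤ ∑ e ∈ hcut edge P, m e := by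
  rcases P.parts.eq_empty_or_nonempty with hP | hP
  · simp [hP]
  have huncut : ∑ e ∈ (hcut edge P)ᶜ, m e ≤ ∑ p ∈ P.parts, ∑ e ∈ edgesIn edge p, m e :=
    calc ∑ e ∈ (hcut edge P)ᶜ, m e
        ≤ ∑ e ∈ (hcut edge P)ᶜ, ∑ p ∈ P.parts with edge e ⊆ p, m e := by
          refine sum_le_sum fun e he => ?_
          obtain ⟨p, hp, hep⟩ := exists_subset_part_of_notMem_hcut (mem_compl.1 he) hP
          exact single_le_sum (f := fun _ => m e) (fun _ _ => Nat.zero_le _)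
            (mem_filter.2 ⟨hp, hep⟩)
      _ ≤ ∑ e, ∑ p ∈ P.parts with edge e ⊆ p, m e := sum_le_sum_of_subset (subset_univ _)
      _ = ∑ p ∈ P.parts, ∑ e ∈ edgesIn edge p, m e := sum_comm' (by simp [edgesIn, and_comm])
  have hparts : ∑ p ∈ P.parts, ∑ e ∈ edgesIn edge p, m e ≤ ∑ p ∈ P.parts, (p.card - 1) :=
    sum_le_sum fun p hp => hm.2 p (P.nonempty_of_mem_parts hp)
  have hcount : ∑ p ∈ P.parts, (p.card - 1) + P.parts.card = Fintype.card V := by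
    rw [card_eq_sum_ones, ← sum_add_distrib, ← card_univ, ← P.sum_card_parts]
    exact sum_congr rfl fun p hp => Nat.sub_add_cancel (P.nonempty_of_mem_parts hp).card_pos
  have htotal := sum_add_sum_compl (hcut edge P) m
  rw [hm.1] at htotal
  omega

lemma IsMultiTree.sum_hcut_bot {m : E → ℕ} (hm : IsMultiTree edge m) :
    ∑ e ∈ hcut edge ⊥, m e = Fintype.card V - 1 := by
  refine le_antisymm (hm.1 ▸ sum_le_sum_of_subset (subset_univ _)) ?_
  simpa [Finpartition.card_bot] using hm.card_parts_sub_one_le_sum_hcut ⊥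

end Cuts

section Ratios

variable {V E : Type*} [Fintype V] [DecidableEq V] [Fintype E] {σ : E → ℝ} {edge : E → Finset V}
  {P : Finpartition (univ : Finset V)}

lemma bot_mem_cutRatios (hV : 2 ≤ Fintype.card V) :
    (∑ e ∈ hcut edge ⊥, σ e) / ((Fintype.card V : ℝ) - 1) ∈ cutRatios σ edge :=
  ⟨⊥, by rwa [Finpartition.card_bot, card_univ], by rw [Finpartition.card_bot, card_univ]⟩

lemma cutRatios_eq_empty (hV : Fintype.card V ≤ 1) : cutRatios σ edge = ∅ :=
  Set.eq_empty_of_forall_notMem fun _ ⟨P, hP, _⟩ => by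
    have := P.card_parts_le_card
    rw [card_univ] at this
    omega

lemma zero_mem_lowerBounds_cutRatios (hσ : ∀ e, 0 ≤ σ e) :
    0 ∈ lowerBounds (cutRatios σ edge) := by
  rintro r ⟨P, hP, rfl⟩
  have : (2 : ℝ) ≤ P.parts.card := by exact_mod_cast hP
  exact div_nonneg (sum_nonneg fun e _ => hσ e) (by linarith)

lemma strengthW_mem_lowerBounds_cutRatios (hσ : ∀ e, 0 ≤ σ e) :
    strengthW σ edge ∈ lowerBounds (cutRatios σ edge) :=
  fun _ hr => csInf_le ⟨0, zero_mem_lowerBounds_cutRatios hσ⟩ hr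

lemma strengthW_nonneg (hσ : ∀ e, 0 ≤ σ e) : 0 ≤ strengthW σ edge :=
  Real.sInf_nonneg fun _ hr => zero_mem_lowerBounds_cutRatios hσ hr

lemma strengthW_of_card_le_one (hV : Fintype.card V ≤ 1) : strengthW σ edge = 0 := by
  rw [strengthW, ← cutRatios, cutRatios_eq_empty hV, Real.sInf_empty]

noncomputable def cutMetric (edge : E → Finset V) (P : Finpartition (univ : Finset V)) (e : E) :
    ℝ :=
  if e ∈ hcut edge P then ((P.parts.card : ℝ) - 1)⁻¹ else 0

lemma sum_mul_cutMetric (f : E → ℝ) :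
    ∑ e, f e * cutMetric edge P e = (∑ e ∈ hcut edge P, f e) / ((P.parts.card : ℝ) - 1) := by
  simp only [cutMetric, mul_ite, mul_zero, sum_ite_mem, univ_inter, ← sum_mul, div_eq_mul_inv]

lemma cutMetric_mem_AdmSet (hP : 2 ≤ P.parts.card) :
    cutMetric edge P ∈ AdmSet (OmegaSet edge) := by
  have hk : (0 : ℝ) < P.parts.card - 1 := by
    have : (2 : ℝ) ≤ P.parts.card := by exact_mod_cast hP
    linarith
  refine ⟨fun e => ?_, ?_⟩
  · unfold cutMetric
    split_ifs
    exacts [(inv_pos.2 hk).le, le_rfl]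
  · rintro _ ⟨m, hm, rfl⟩
    have hcut_count := hm.card_parts_sub_one_le_sum_hcut P
    rw [sum_mul_cutMetric, le_div_iff₀ hk, one_mul, sub_le_iff_le_add, ← Nat.cast_sum]
    exact_mod_cast Nat.sub_le_iff_le_add.1 hcut_count

lemma Mod1_le_of_mem_cutRatios (hσ : ∀ e, 0 ≤ σ e) {r : ℝ}
    (hr : r ∈ cutRatios σ edge) : Mod1 σ (OmegaSet edge) ≤ r := by
  obtain ⟨P, hP, rfl⟩ := hr
  refine csInf_le ⟨0, ?_⟩ ⟨cutMetric edge P, cutMetric_mem_AdmSet hP, (sum_mul_cutMetric σ).symm⟩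
  rintro _ ⟨ρ, hρ, rfl⟩
  exact sum_nonneg fun e _ => mul_nonneg (hσ e) (hρ.1 e)

lemma Mod1_le_strengthW (hσ : ∀ e, 0 ≤ σ e) (hV : 2 ≤ Fintype.card V) :
    Mod1 σ (OmegaSet edge) ≤ strengthW σ edge :=
  le_csInf ⟨_, bot_mem_cutRatios hV⟩ fun _ hr => Mod1_le_of_mem_cutRatios hσ hr

lemma isMultiTree_zero (edge : E → Finset V) (hV : Fintype.card V ≤ 1) : IsMultiTree edge 0 :=
  ⟨by simp only [Pi.zero_apply, sum_const_zero]; omega, fun _ _ => by simp⟩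

lemma zero_mem_OmegaSet (edge : E → Finset V) (hV : Fintype.card V ≤ 1) : 0 ∈ OmegaSet edge :=
  ⟨0, isMultiTree_zero edge hV, by ext; simp⟩

-- No density is admissible, and `sInf ∅ = 0`.
lemma Mod1_eq_zero_of_zero_mem {G : Set (E → ℝ)} (hG : 0 ∈ G) : Mod1 σ G = 0 := by
  have : AdmSet G = ∅ :=
    Set.eq_empty_of_forall_notMem fun _ hρ => absurd (hρ.2 0 hG) (by simp)
  simp [Mod1, this]

end Ratios

section Surjective

variable {V E W : Type*} [Fintype V] [DecidableEq W] {f : V → W}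

lemma filter_mem_injective (hf : Surjective f) :
    Injective fun p : Finset W => univ.filter (f · ∈ p) := by
  intro p q hpq
  ext x
  obtain ⟨v, rfl⟩ := hf x
  simpa using congrArg (v ∈ ·) hpq

lemma inter_filter_mem_nonempty_iff [DecidableEq V] {s : Finset V} {q : Finset W} :
    (s ∩ univ.filter (f · ∈ q)).Nonempty ↔ (s.image f ∩ q).Nonempty := by
  simp [Finset.Nonempty]

variable [Fintype W]

lemma HConnected.image {edge : E → Finset V} (hconn : HConnected edge) (hf : Surjective f) :
    HConnected fun e => (edge e).image f := by
  rintro X' - hX'ne hX'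
  obtain ⟨e, -, ⟨v, hv⟩, ⟨w, hw⟩⟩ := hconn (univ.filter (f · ∈ X')) (subset_univ _)
    (by obtain ⟨x, hx⟩ := hX'ne; obtain ⟨v, rfl⟩ := hf x; exact ⟨v, by simpa using hx⟩)
    (fun h => hX' (eq_univ_of_forall fun x => by
      obtain ⟨v, rfl⟩ := hf x
      have hv : v ∈ univ.filter (f · ∈ X') := by rw [h]; exact mem_univ v
      simpa using hv))
  simp only [mem_inter, mem_sdiff, mem_filter, mem_univ, true_and, and_true] at hv hw
  refine ⟨e, subset_univ _, ⟨f v, ?_⟩, ⟨f w, ?_⟩⟩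
  · simp only [mem_inter]
    exact ⟨mem_image_of_mem f hv.1, hv.2⟩
  · simp only [mem_sdiff, mem_inter]
    exact ⟨⟨mem_image_of_mem f hw.1, mem_univ _⟩, hw.2⟩

variable [DecidableEq V]

def Finpartition.comap (P : Finpartition (univ : Finset W)) (f : V → W) (hf : Surjective f) :
    Finpartition (univ : Finset V) :=
  Finpartition.ofExistsUnique (P.parts.image fun p => univ.filter (f · ∈ p))
    (fun _ _ => subset_univ _)
    (fun v _ => by
      obtain ⟨p, hp, hvp⟩ := P.exists_mem (mem_univ (f v))
      refine ⟨univ.filter (f · ∈ p), ⟨mem_image_of_mem _ hp, by simpa using hvp⟩, ?_⟩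
      rintro _ ⟨hq', hvq⟩
      obtain ⟨q, hq, rfl⟩ := mem_image.1 hq'
      have hqp : q = p := P.eq_of_mem_parts hq hp (by simpa using hvq) hvp
      rw [hqp])
    (fun h => by
      obtain ⟨p, hp, hpe⟩ := mem_image.1 h
      obtain ⟨x, hx⟩ := P.nonempty_of_mem_parts hp
      obtain ⟨v, rfl⟩ := hf x
      simpa [hx] using congrArg (v ∈ ·) hpe)

lemma Finpartition.mem_comap_parts {P : Finpartition (univ : Finset W)} {hf : Surjective f}
    {p : Finset V} : p ∈ (P.comap f hf).parts ↔ ∃ q ∈ P.parts, univ.filter (f · ∈ q) = p := by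
  simp [Finpartition.comap]

lemma Finpartition.card_parts_comap (P : Finpartition (univ : Finset W)) (hf : Surjective f) :
    (P.comap f hf).parts.card = P.parts.card :=
  card_image_of_injective _ (filter_mem_injective hf)

variable [Fintype E] {edge : E → Finset V}

lemma hcut_comap (P : Finpartition (univ : Finset W)) (hf : Surjective f) :
    hcut edge (P.comap f hf) = hcut (fun e => (edge e).image f) P := by
  ext e
  simp only [hcut, mem_filter, mem_univ, true_and, Finpartition.mem_comap_parts]
  constructor
  · rintro ⟨_, ⟨p, hp, rfl⟩, _, ⟨q, hq, rfl⟩, hpq, hep, heq⟩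
    exact ⟨p, hp, q, hq, fun h => hpq (h ▸ rfl), inter_filter_mem_nonempty_iff.1 hep,
      inter_filter_mem_nonempty_iff.1 heq⟩
  · rintro ⟨p, hp, q, hq, hpq, hep, heq⟩
    exact ⟨_, ⟨p, hp, rfl⟩, _, ⟨q, hq, rfl⟩, fun h => hpq (filter_mem_injective hf h),
      inter_filter_mem_nonempty_iff.2 hep, inter_filter_mem_nonempty_iff.2 heq⟩

lemma cutRatios_image_subset (σ : E → ℝ) (hf : Surjective f) :
    cutRatios σ (fun e => (edge e).image f) ⊆ cutRatios σ edge := by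
  rintro _ ⟨P, hP, rfl⟩
  refine ⟨P.comap f hf, ?_, ?_⟩ <;> rw [Finpartition.card_parts_comap]
  · exact hP
  · rw [hcut_comap]

end Surjective

section Contraction

variable {V E W : Type*}

def IsContraction (f : V → W) (B : Finset V) : Prop :=
  ∀ u v, f u = f v ↔ u = v ∨ u ∈ B ∧ v ∈ B

variable [DecidableEq V] {B : Finset V}

def contractMap (B : Finset V) (v : V) : Option {v // v ∉ B} :=
  if h : v ∈ B then none else some ⟨v, h⟩

lemma isContraction_contractMap (B : Finset V) : IsContraction (contractMap B) B := by
  intro u v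
  unfold contractMap
  split_ifs with hu hv hv <;> simp [hu, hv]
  · rintro rfl; exact hv hu
  · rintro rfl; exact hu hv

lemma contractMap_surjective (hB : B.Nonempty) : Surjective (contractMap B) := by
  rintro (_ | ⟨v, hv⟩)
  · obtain ⟨b, hb⟩ := hB
    exact ⟨b, dif_pos hb⟩
  · exact ⟨v, dif_neg hv⟩

variable [DecidableEq W] {f : V → W}

lemma IsContraction.card_image (hf : IsContraction f B) {b : V} (hb : b ∈ B) {X : Finset V}
    (hBX : B ⊆ X) : (X.image f).card = X.card - B.card + 1 := by
  have himage : X.image f = (insert b (X \ B)).image f := by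
    refine Subset.antisymm (fun w hw => ?_)
      (image_subset_image (insert_subset (hBX hb) sdiff_subset))
    obtain ⟨x, hx, rfl⟩ := mem_image.1 hw
    by_cases hxB : x ∈ B
    · exact mem_image.2 ⟨b, mem_insert_self _ _, (hf b x).2 (Or.inr ⟨hb, hxB⟩)⟩
    · exact mem_image_of_mem f (mem_insert_of_mem (mem_sdiff.2 ⟨hx, hxB⟩))
  have hinj : Set.InjOn f (insert b (X \ B) : Finset V) := by
    intro u hu v hv huv
    simp only [coe_insert, coe_sdiff, Set.mem_insert_iff, Set.mem_sdiff, mem_coe] at hu hv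
    rcases (hf u v).1 huv with h | ⟨huB, hvB⟩
    · exact h
    · rcases hu with rfl | hu <;> rcases hv with rfl | hv <;> tauto
  rw [himage, card_image_of_injOn hinj, card_insert_of_notMem (by simp [hb]),
    card_sdiff_of_subset hBX]

variable [Fintype V] [Fintype W]

lemma IsContraction.card_eq (hf : IsContraction f B) (hsurj : Surjective f) {b : V}
    (hb : b ∈ B) : Fintype.card W = Fintype.card V - B.card + 1 := by
  rw [← card_univ, ← image_univ_of_surjective hsurj, hf.card_image hb (subset_univ B), card_univ]

lemma IsMultiTree.of_image [Fintype E] {edge : E → Finset V} {e₀ : E}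
    (hf : IsContraction f (edge e₀)) (hsurj : Surjective f) (hne : (edge e₀).Nonempty) {m : E → ℕ}
    (hm : IsMultiTree (fun e => (edge e).image f) m) :
    IsMultiTree edge (m + Pi.single e₀ ((edge e₀).card - 1)) := by
  obtain ⟨b, hb⟩ := hne
  have hcard := hf.card_eq hsurj hb
  have hBV : (edge e₀).card ≤ Fintype.card V := card_le_univ _
  have hB1 := card_pos.2 ⟨b, hb⟩
  refine ⟨?_, fun X hX => ?_⟩
  · simp only [Pi.add_apply, sum_add_distrib, hm.1, sum_pi_single', mem_univ, if_true, hcard]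
    omega
  have hsub : ∑ e ∈ edgesIn edge X, m e ≤ (X.image f).card - 1 := by
    refine (sum_le_sum_of_subset fun e he => ?_).trans (hm.2 _ (hX.image f))
    simp only [edgesIn, mem_filter, mem_univ, true_and] at he ⊢
    exact image_subset_image he
  simp only [Pi.add_apply, sum_add_distrib, sum_pi_single']
  split_ifs with he₀
  · have hBX : edge e₀ ⊆ X := (mem_filter.1 he₀).2
    have := hf.card_image hb hBX
    have := card_le_card hBX
    omega
  · have := card_image_le (s := X) (f := f)
    omega

end Contraction

section Key

variable {V E : Type*} [Fintype V] [DecidableEq V] [Fintype E] {edge : E → Finset V} {σ : E → ℝ} {s : ℝ}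

lemma IsMultiTree.mul_sum_le_of_mul_sum_sub_le {m : E → ℕ} (hm : IsMultiTree edge m)
    (hV : 2 ≤ Fintype.card V) (hs : s ∈ lowerBounds (cutRatios σ edge)) {ρ : E → ℝ} {μ : ℝ}
    (hμ : 0 ≤ μ)
    (h : s * ∑ e, m e * (ρ e - if e ∈ hcut edge ⊥ then μ else 0) ≤
      ∑ e, σ e * (ρ e - if e ∈ hcut edge ⊥ then μ else 0)) :
    s * ∑ e, (m e : ℝ) * ρ e ≤ ∑ e, σ e * ρ e := by
  have hsplit (g : E → ℝ) : ∑ e, g e * (ρ e - if e ∈ hcut edge ⊥ then μ else 0) =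
      ∑ e, g e * ρ e - (∑ e ∈ hcut edge ⊥, g e) * μ := by
    simp only [mul_sub, mul_ite, mul_zero, sum_sub_distrib, sum_ite_mem, univ_inter, sum_mul]
  have hmD : ∑ e ∈ hcut edge ⊥, (m e : ℝ) = Fintype.card V - 1 := by
    rw [← Nat.cast_sum, hm.sum_hcut_bot, Nat.cast_sub (by omega), Nat.cast_one]
  have hσD : s * (Fintype.card V - 1) ≤ ∑ e ∈ hcut edge ⊥, σ e := by
    have : (2 : ℝ) ≤ Fintype.card V := by exact_mod_cast hV
    exact (le_div_iff₀ (by linarith)).1 (hs (bot_mem_cutRatios hV))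
  rw [hsplit, hsplit, hmD] at h
  nlinarith [mul_le_mul_of_nonneg_left hσD hμ]

theorem HConnected.exists_isMultiTree_mul_sum_le (hconn : HConnected edge)
    (hσ : ∀ e, 0 ≤ σ e) (hs : s ∈ lowerBounds (cutRatios σ edge)) {ρ : E → ℝ}
    (hρ : ∀ e, 0 ≤ ρ e) :
    ∃ m : E → ℕ, IsMultiTree edge m ∧ s * ∑ e, (m e : ℝ) * ρ e ≤ ∑ e, σ e * ρ e := by
  induction hn : Fintype.card V using Nat.strong_induction_on generalizing V ρ with
  | _ n ih =>
  rcases le_or_gt n 1 with hV | hV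
  · refine ⟨0, isMultiTree_zero edge (hn ▸ hV), ?_⟩
    simpa using sum_nonneg fun e _ => mul_nonneg (hσ e) (hρ e)
  obtain ⟨e₀, he₀, hmin⟩ := exists_min_image (hcut edge ⊥) ρ
    (hconn.hcut_nonempty (by rw [Finpartition.card_bot, card_univ]; omega))
  have hB := two_le_card_of_mem_hcut he₀
  obtain ⟨b, hb⟩ : (edge e₀).Nonempty := card_pos.1 (by omega)
  have hf := isContraction_contractMap (edge e₀)
  have hsurj := contractMap_surjective ⟨b, hb⟩
  have hρ' (e : E) : 0 ≤ ρ e - if e ∈ hcut edge ⊥ then ρ e₀ else 0 := by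
    split_ifs with he
    · linarith [hmin e he]
    · simpa using hρ e
  obtain ⟨m, hm, hle⟩ := ih _ (by rw [hf.card_eq hsurj hb]; omega) (hconn.image hsurj)
    (fun r hr => hs (cutRatios_image_subset σ hsurj hr)) hρ' rfl
  have hlift := hm.of_image hf hsurj ⟨b, hb⟩
  refine ⟨_, hlift, hlift.mul_sum_le_of_mul_sum_sub_le (by omega) hs (hρ e₀) ?_⟩
  -- the lowered density vanishes at `e₀`, so the added copies of `e₀` cost nothing
  convert hle using 2
  refine sum_congr rfl fun e _ => ?_
  rcases eq_or_ne e e₀ with rfl | he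
  · simp [he₀]
  · simp [he]

lemma strengthW_le_Mod1 (hconn : HConnected edge) (hσ : ∀ e, 0 ≤ σ e)
    (hV : 2 ≤ Fintype.card V) : strengthW σ edge ≤ Mod1 σ (OmegaSet edge) := by
  refine le_csInf ⟨_, cutMetric edge ⊥, cutMetric_mem_AdmSet (by
    rwa [Finpartition.card_bot, card_univ]), rfl⟩ ?_
  rintro _ ⟨ρ, hρ, rfl⟩
  obtain ⟨m, hm, hle⟩ :=
    hconn.exists_isMultiTree_mul_sum_le hσ (strengthW_mem_lowerBounds_cutRatios hσ) hρ.1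
  calc strengthW σ edge = strengthW σ edge * 1 := (mul_one _).symm
    _ ≤ strengthW σ edge * ∑ e, (m e : ℝ) * ρ e :=
      mul_le_mul_of_nonneg_left (hρ.2 _ ⟨m, hm, rfl⟩) (strengthW_nonneg hσ)
    _ ≤ ∑ e, σ e * ρ e := hle

end Key

theorem stmt9_general {V E : Type*} [Fintype V] [DecidableEq V] [Fintype E]
    (edge : E → Finset V) (hconn : HConnected edge)
    (σ : E → ℝ) (hσ : ∀ e, 0 < σ e) :
    Mod1 σ (OmegaSet edge) = strengthW σ edge := by
  rcases le_or_gt (Fintype.card V) 1 with hV | hV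
  · rw [strengthW_of_card_le_one hV, Mod1_eq_zero_of_zero_mem (zero_mem_OmegaSet edge hV)]
  · exact le_antisymm (Mod1_le_strengthW (fun e => (hσ e).le) hV)
      (strengthW_le_Mod1 hconn (fun e => (hσ e).le) hV)

/-- For a connected hypergraph and positive weights `σ`,
`Mod_{1,σ}(Ω(H)) = S_σ(H)`. -/
theorem stmt9 {V E : Type*} [Fintype V] [DecidableEq V] [Fintype E] [DecidableEq E]
    (edge : E → Finset V) (hconn : HConnected edge)
    (σ : E → ℝ) (hσ : ∀ e, 0 < σ e) :
    Mod1 σ (OmegaSet edge) = strengthW σ edge :=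
  stmt9_general edge hconn σ hσ
end
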